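/- arXiv:1803.03899 — 3 statements merged into one kernel-verified Lean document; each statement's English description precedes it below -/
import Mathlib

section
/- Generalized Koksma inequality: if g : [0,1] → ℝ is bounded and of bounded variation, F is a C¹ distribution function on [0,1] with 0 < c_F < F'(t) < C_F, D*_N is the star discrepancy of the points t_1,...,t_N with respect to F, and the weights w_i satisfy |w_i − 1| ≤ C·D*_N for all i, then |∫₀¹ g(t) dF(t) − (1/N)·Σ_{i=1}^N g(t_i)·w_i| ≤ (‖g‖_TV + C·‖g‖_∞)·D*_N. -/
/-!
Sort the points and pad them by `0` and `1` to a chain `0 = y₀ ≤ y₁ ≤ ⋯ ≤ y_{N+1} = 1`. On the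
open cell `(y_j, y_{j+1})` the empirical distribution function is the constant `j / N`, so there
`|F - j / N| ≤ D*_N`. On each cell, integration by parts writes `∫ g dF` as the boundary term
`[(F - j/N) g]` minus the Stieltjes integral `∫ (F - j/N) dg`, and the latter is at most `D*_N`
times the variation of `g` on the cell: this is seen on Riemann–Stieltjes sums over uniform
partitions, whose error is `O(mesh)` because `F'` is bounded. Summed over the cells, the
boundary terms telescope to `(1/N) ∑ g(t_i)` and the variations add up to `‖g‖_TV`. The weights
add at most `‖g‖_∞ · C D*_N`.
-/

open Set MeasureTheory Filter Topology

theorem BoundedVariationOn.intervalIntegrable {f : ℝ → ℝ} {a b : ℝ}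
    (hf : BoundedVariationOn f (uIcc a b)) : IntervalIntegrable f volume a b := by
  obtain ⟨p, q, hp, hq, rfl⟩ := hf.locallyBoundedVariationOn.exists_monotoneOn_sub_monotoneOn
  exact hp.intervalIntegrable.sub hq.intervalIntegrable

theorem abs_sum_le_mul_eVariationOn {g : ℝ → ℝ} {y : ℕ → ℝ} (hy : Monotone y) {n : ℕ}
    (hg : BoundedVariationOn g (Icc (y 0) (y n))) {e : ℕ → ℝ} {A : ℝ}
    (he : ∀ j < n, |e j| ≤ A * (eVariationOn g (Icc (y j) (y (j + 1)))).toReal) :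
    |∑ j ∈ Finset.range n, e j| ≤ A * (eVariationOn g (Icc (y 0) (y n))).toReal := by
  have hcell : ∀ j ∈ Finset.range n, eVariationOn g (Icc (y j) (y (j + 1))) ≠ ⊤ :=
    fun j hj => hg.mono (Icc_subset_Icc (hy (Nat.zero_le j)) (hy (Finset.mem_range.1 hj)))
  calc |∑ j ∈ Finset.range n, e j| ≤ ∑ j ∈ Finset.range n, |e j| :=
        Finset.abs_sum_le_sum_abs _ _
    _ ≤ ∑ j ∈ Finset.range n, A * (eVariationOn g (Icc (y j) (y (j + 1)))).toReal :=
      Finset.sum_le_sum fun j hj => he j (Finset.mem_range.1 hj)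
    _ = A * (eVariationOn g (Icc (y 0) (y n))).toReal := by
      rw [← Finset.mul_sum, ← ENNReal.toReal_sum hcell, eVariationOn.sum' g hy]

/-- By integration by parts, this is the Stieltjes integral `∫_u^v (F - c) dg` when `F' = dF/ds`.
-/
noncomputable def stieltjesRemainder (F F' g : ℝ → ℝ) (c u v : ℝ) : ℝ :=
  (F v - c) * g v - (F u - c) * g u - ∫ s in u..v, g s * F' s

section StieltjesRemainder

variable {F F' g : ℝ → ℝ}

theorem intervalIntegrable_mul_of_boundedVariationOn {u v : ℝ} (huv : u ≤ v)
    (hg : BoundedVariationOn g (Icc u v)) (hF' : ContinuousOn F' (Icc u v)) :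
    IntervalIntegrable (fun s => g s * F' s) volume u v := by
  rw [← uIcc_of_le huv] at hg hF'
  exact hg.intervalIntegrable.mul_continuousOn hF'

theorem sum_range_stieltjesRemainder (c : ℝ) (p : ℕ → ℝ) {n : ℕ}
    (hint : ∀ j < n, IntervalIntegrable (fun s => g s * F' s) volume (p j) (p (j + 1))) :
    ∑ j ∈ Finset.range n, stieltjesRemainder F F' g c (p j) (p (j + 1))
      = stieltjesRemainder F F' g c (p 0) (p n) := by
  simp only [stieltjesRemainder]
  rw [Finset.sum_sub_distrib, Finset.sum_range_sub (fun j => (F (p j) - c) * g (p j)),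
    intervalIntegral.sum_integral_adjacent_intervals hint]

theorem stieltjesRemainder_eq {c u v : ℝ} (huv : u ≤ v)
    (hF : ∀ s ∈ Icc u v, HasDerivAt F (F' s) s) (hF' : ContinuousOn F' (Icc u v))
    (hg : IntervalIntegrable g volume u v) :
    stieltjesRemainder F F' g c u v
      = (F v - c) * (g v - g u) + ∫ s in u..v, (g u - g s) * F' s := by
  rw [← uIcc_of_le huv] at hF hF'
  have hF'int : IntervalIntegrable F' volume u v := hF'.intervalIntegrable
  have hFTC : ∫ s in u..v, F' s = F v - F u :=
    intervalIntegral.integral_eq_sub_of_hasDerivAt hF hF'int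
  simp only [stieltjesRemainder, sub_mul]
  rw [intervalIntegral.integral_sub (hF'int.const_mul _) (hg.mul_continuousOn hF'),
    intervalIntegral.integral_const_mul, hFTC]
  ring

theorem abs_stieltjesRemainder_le_add_mul {c u v D K : ℝ} (huv : u ≤ v)
    (hF : ∀ s ∈ Icc u v, HasDerivAt F (F' s) s) (hF' : ContinuousOn F' (Icc u v))
    (hg : BoundedVariationOn g (Icc u v)) (hD : |F v - c| ≤ D)
    (hK : ∀ s ∈ Icc u v, |F' s| ≤ K) :
    |stieltjesRemainder F F' g c u v|
      ≤ (D + K * (v - u)) * (eVariationOn g (Icc u v)).toReal := by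
  set V := (eVariationOn g (Icc u v)).toReal
  have hosc : ∀ s ∈ Icc u v, |g u - g s| ≤ V := fun s hs =>
    (Real.dist_eq _ _).symm.le.trans (hg.dist_le (left_mem_Icc.2 huv) hs)
  have hboundary : |(F v - c) * (g v - g u)| ≤ D * V := by
    rw [abs_mul, abs_sub_comm (g v)]
    exact mul_le_mul hD (hosc v (right_mem_Icc.2 huv)) (abs_nonneg _) ((abs_nonneg _).trans hD)
  have hintegral : |∫ s in u..v, (g u - g s) * F' s| ≤ V * K * (v - u) := by
    have := intervalIntegral.norm_integral_le_of_norm_le_const (a := u) (b := v) (C := V * K)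
      (f := fun s => (g u - g s) * F' s) fun s hs => by
        rw [uIoc_of_le huv] at hs
        rw [Real.norm_eq_abs, abs_mul]
        exact mul_le_mul (hosc s (Ioc_subset_Icc_self hs)) (hK s (Ioc_subset_Icc_self hs))
          (abs_nonneg _) ENNReal.toReal_nonneg
    rwa [Real.norm_eq_abs, abs_of_nonneg (sub_nonneg.2 huv)] at this
  rw [stieltjesRemainder_eq huv hF hF' (hg.mono (uIcc_of_le huv).subset).intervalIntegrable]
  calc _ ≤ D * V + V * K * (v - u) := (abs_add_le _ _).trans (add_le_add hboundary hintegral)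
    _ = _ := by ring

theorem abs_stieltjesRemainder_le_add_div {c a b D K : ℝ} (hab : a ≤ b)
    (hF : ∀ s ∈ Icc a b, HasDerivAt F (F' s) s) (hF' : ContinuousOn F' (Icc a b))
    (hg : BoundedVariationOn g (Icc a b)) (hD : ∀ s ∈ Icc a b, |F s - c| ≤ D)
    (hK : ∀ s ∈ Icc a b, |F' s| ≤ K) {n : ℕ} (hn : n ≠ 0) :
    |stieltjesRemainder F F' g c a b|
      ≤ (D + K * (b - a) / n) * (eVariationOn g (Icc a b)).toReal := by
  set δ := (b - a) / n
  set p : ℕ → ℝ := fun j => a + j * δ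
  have hp : Monotone p := fun i j hij => by
    have : (i : ℝ) ≤ j := Nat.cast_le.2 hij
    have : 0 ≤ δ := div_nonneg (sub_nonneg.2 hab) (Nat.cast_nonneg n)
    simp only [p]; gcongr
  have hp0 : p 0 = a := by simp [p]
  have hpn : p n = b := by simp only [p, δ]; field_simp; ring
  have hcell : ∀ j < n, Icc (p j) (p (j + 1)) ⊆ Icc a b := fun j hj =>
    Icc_subset_Icc (hp0 ▸ hp (Nat.zero_le j)) (hpn ▸ hp hj)
  have hstep : ∀ j, p (j + 1) - p j = δ := fun j => by simp only [p]; push_cast; ring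
  have hint : ∀ j < n, IntervalIntegrable (fun s => g s * F' s) volume (p j) (p (j + 1)) :=
    fun j hj => intervalIntegrable_mul_of_boundedVariationOn (hp (j.le_add_right 1))
      (hg.mono (hcell j hj)) (hF'.mono (hcell j hj))
  calc |stieltjesRemainder F F' g c a b|
      = |∑ j ∈ Finset.range n, stieltjesRemainder F F' g c (p j) (p (j + 1))| := by
        rw [sum_range_stieltjesRemainder c p hint, hp0, hpn]
    _ ≤ (D + K * δ) * (eVariationOn g (Icc (p 0) (p n))).toReal := by
      refine abs_sum_le_mul_eVariationOn hp (by rwa [hp0, hpn]) fun j hj => ?_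
      have hle := hp (j.le_add_right 1)
      have hsub := hcell j hj
      rw [← hstep j]
      exact abs_stieltjesRemainder_le_add_mul hle (fun s hs => hF s (hsub hs)) (hF'.mono hsub)
        (hg.mono hsub) (hD _ (hsub (right_mem_Icc.2 hle))) fun s hs => hK s (hsub hs)
    _ = _ := by rw [hp0, hpn, mul_div_assoc]

theorem abs_stieltjesRemainder_le {c a b D : ℝ} (hab : a ≤ b)
    (hF : ∀ s ∈ Icc a b, HasDerivAt F (F' s) s) (hF' : ContinuousOn F' (Icc a b))
    (hg : BoundedVariationOn g (Icc a b)) (hD : ∀ s ∈ Ioo a b, |F s - c| ≤ D) :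
    |stieltjesRemainder F F' g c a b| ≤ D * (eVariationOn g (Icc a b)).toReal := by
  obtain rfl | hlt := hab.eq_or_lt
  · simp [stieltjesRemainder, eVariationOn.subsingleton]
  have hD' : ∀ s ∈ Icc a b, |F s - c| ≤ D := fun s hs =>
    ContinuousWithinAt.closure_le (by rwa [closure_Ioo hlt.ne])
      ((hF s hs).continuousAt.sub continuousAt_const).abs.continuousWithinAt
      continuousWithinAt_const hD
  obtain ⟨K, hK⟩ := isCompact_Icc.exists_bound_of_continuousOn hF'
  have hlim : Tendsto (fun n : ℕ => (D + K * (b - a) / n) * (eVariationOn g (Icc a b)).toReal)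
      atTop (𝓝 (D * (eVariationOn g (Icc a b)).toReal)) := by
    simpa using ((tendsto_const_div_atTop_nhds_zero_nat (K * (b - a))).const_add D).mul_const
      (eVariationOn g (Icc a b)).toReal
  exact ge_of_tendsto hlim <| (eventually_ne_atTop 0).mono fun n hn =>
    abs_stieltjesRemainder_le_add_div hab hF hF' hg hD' hK hn

theorem abs_sum_stieltjesRemainder_le {y : ℕ → ℝ} (hy : Monotone y) {n : ℕ} {c : ℕ → ℝ}
    {D : ℝ} (hF : ∀ s ∈ Icc (y 0) (y n), HasDerivAt F (F' s) s)
    (hF' : ContinuousOn F' (Icc (y 0) (y n)))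
    (hg : BoundedVariationOn g (Icc (y 0) (y n)))
    (hD : ∀ j < n, ∀ s ∈ Ioo (y j) (y (j + 1)), |F s - c j| ≤ D) :
    |∑ j ∈ Finset.range n, stieltjesRemainder F F' g (c j) (y j) (y (j + 1))|
      ≤ D * (eVariationOn g (Icc (y 0) (y n))).toReal := by
  refine abs_sum_le_mul_eVariationOn hy hg fun j hj => ?_
  have hcell : Icc (y j) (y (j + 1)) ⊆ Icc (y 0) (y n) :=
    Icc_subset_Icc (hy j.zero_le) (hy hj)
  exact abs_stieltjesRemainder_le (hy (j.le_add_right 1)) (fun s hs => hF s (hcell hs))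
    (hF'.mono hcell) (hg.mono hcell) (hD j hj)

end StieltjesRemainder

noncomputable def sortedChain {N : ℕ} (t : Fin N → ℝ) : ℕ → ℝ
  | 0 => 0
  | k + 1 => if h : k < N then t (Tuple.sort t ⟨k, h⟩) else 1

section SortedChain

variable {N : ℕ} {t : Fin N → ℝ}

@[simp] theorem sortedChain_zero : sortedChain t 0 = 0 := rfl

theorem sortedChain_succ_of_lt {k : ℕ} (hk : k < N) :
    sortedChain t (k + 1) = t (Tuple.sort t ⟨k, hk⟩) := dif_pos hk

@[simp] theorem sortedChain_succ_self : sortedChain t (N + 1) = 1 := dif_neg (lt_irrefl N)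

theorem sortedChain_monotone (ht : ∀ i, t i ∈ Icc 0 1) : Monotone (sortedChain t) := by
  refine monotone_nat_of_le_succ fun k => ?_
  rcases k with _ | k
  · simp only [sortedChain]
    split_ifs
    exacts [(ht _).1, zero_le_one]
  · simp only [sortedChain]
    split_ifs with h₁ h₂ h₂
    · exact Tuple.monotone_sort t (Fin.mk_le_mk.2 k.le_succ)
    · exact (ht _).2
    · omega
    · exact le_rfl

theorem card_filter_le_of_mem_Ioo_sortedChain {j : ℕ} (hj : j ≤ N) {s : ℝ}
    (hs : s ∈ Ioo (sortedChain t j) (sortedChain t (j + 1))) :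
    (Finset.univ.filter fun i => t i ≤ s).card = j := by
  have hsort := Tuple.monotone_sort t
  have hiff : ∀ i : Fin N, t (Tuple.sort t i) ≤ s ↔ (i : ℕ) < j := fun i => by
    constructor
    · intro hi
      by_contra! hji
      have hjN : j < N := hji.trans_lt i.isLt
      have : sortedChain t (j + 1) ≤ t (Tuple.sort t i) := by
        rw [sortedChain_succ_of_lt hjN]
        exact hsort (show (⟨j, hjN⟩ : Fin N) ≤ i from hji)
      linarith [hs.2]
    · intro hij
      obtain ⟨k, rfl⟩ : ∃ k, j = k + 1 := Nat.exists_eq_add_one.2 (by omega)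
      have hk : k < N := by omega
      have : t (Tuple.sort t i) ≤ sortedChain t (k + 1) := by
        rw [sortedChain_succ_of_lt hk]
        exact hsort (show i ≤ (⟨k, hk⟩ : Fin N) from Nat.le_of_lt_succ hij)
      linarith [hs.1]
  calc (Finset.univ.filter fun i => t i ≤ s).card
      = (Finset.univ.filter fun i => t (Tuple.sort t i) ≤ s).card := by
        simp only [Finset.card_filter]
        exact (Equiv.sum_comp (Tuple.sort t) fun i => if t i ≤ s then 1 else 0).symm
    _ = (Finset.univ.filter fun i : Fin N => (i : ℕ) < j).card := by simp_rw [hiff]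
    _ = j := by rw [Fin.card_filter_val_lt, min_eq_right hj]

theorem sum_range_sortedChain (g : ℝ → ℝ) :
    ∑ j ∈ Finset.range N, g (sortedChain t (j + 1)) = ∑ i, g (t i) := by
  rw [← Fin.sum_univ_eq_sum_range (fun j => g (sortedChain t (j + 1)))]
  simp_rw [sortedChain_succ_of_lt (Fin.isLt _)]
  exact Equiv.sum_comp (Tuple.sort t) (g ∘ t)

end SortedChain

theorem sum_stieltjesRemainder_sortedChain {N : ℕ} (hN : N ≠ 0) (t : Fin N → ℝ)
    {F F' g : ℝ → ℝ} (hF0 : F 0 = 0) (hF1 : F 1 = 1)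
    (hint : ∀ j < N + 1, IntervalIntegrable (fun s => g s * F' s) volume
      (sortedChain t j) (sortedChain t (j + 1))) :
    ∑ j ∈ Finset.range (N + 1),
        stieltjesRemainder F F' g (j / N) (sortedChain t j) (sortedChain t (j + 1))
      = (1 / N) * ∑ i, g (t i) - ∫ s in (0:ℝ)..1, g s * F' s := by
  set y := sortedChain t
  have hterm : ∀ j : ℕ, stieltjesRemainder F F' g (j / N) (y j) (y (j + 1))
      = ((F (y (j + 1)) - ((j + 1 : ℕ) : ℝ) / N) * g (y (j + 1)) - (F (y j) - j / N) * g (y j))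
        + 1 / N * g (y (j + 1)) - ∫ s in y j..y (j + 1), g s * F' s := fun j => by
    simp only [stieltjesRemainder]
    push_cast
    ring
  rw [Finset.sum_congr rfl fun j _ => hterm j, Finset.sum_sub_distrib, Finset.sum_add_distrib,
    Finset.sum_range_sub (fun j => (F (y j) - j / N) * g (y j)),
    intervalIntegral.sum_integral_adjacent_intervals hint, ← Finset.mul_sum,
    Finset.sum_range_succ, sum_range_sortedChain]
  simp only [y, sortedChain_zero, sortedChain_succ_self, hF0, hF1]
  field_simp
  push_cast
  ring

theorem abs_integral_sub_mean_le {N : ℕ} (hN : N ≠ 0) {t : Fin N → ℝ}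
    (ht : ∀ i, t i ∈ Icc (0:ℝ) 1) {F F' g : ℝ → ℝ} (hg : BoundedVariationOn g (Icc 0 1))
    (hF0 : F 0 = 0) (hF1 : F 1 = 1) (hF : ∀ s ∈ Icc (0:ℝ) 1, HasDerivAt F (F' s) s)
    (hF' : ContinuousOn F' (Icc 0 1)) {D : ℝ}
    (hD : ∀ s ∈ Icc (0:ℝ) 1,
      |((Finset.univ.filter fun i => t i ≤ s).card : ℝ) / N - F s| ≤ D) :
    |(∫ s in (0:ℝ)..1, g s * F' s) - (1 / N) * ∑ i, g (t i)|
      ≤ (eVariationOn g (Icc 0 1)).toReal * D := by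
  have hy := sortedChain_monotone ht
  have hcell : ∀ j < N + 1, Icc (sortedChain t j) (sortedChain t (j + 1)) ⊆ Icc 0 1 :=
    fun j hj => Icc_subset_Icc (sortedChain_zero (t := t) ▸ hy j.zero_le)
      (sortedChain_succ_self (t := t) ▸ hy hj)
  have hint := fun j hj => intervalIntegrable_mul_of_boundedVariationOn (hy (j.le_add_right 1))
    (hg.mono (hcell j hj)) (hF'.mono (hcell j hj))
  have hD' : ∀ j < N + 1, ∀ s ∈ Ioo (sortedChain t j) (sortedChain t (j + 1)),
      |F s - (j : ℕ) / N| ≤ D := fun j hj s hs => by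
    have := hD s (hcell j hj (Ioo_subset_Icc_self hs))
    rwa [card_filter_le_of_mem_Ioo_sortedChain (by omega) hs, abs_sub_comm] at this
  rw [abs_sub_comm, ← sum_stieltjesRemainder_sortedChain hN t hF0 hF1 hint, mul_comm]
  rw [← sortedChain_zero (t := t), ← sortedChain_succ_self (t := t)] at hF hF' hg ⊢
  exact abs_sum_stieltjesRemainder_le hy hF hF' hg hD'

theorem abs_mean_mul_sub_one_le {N : ℕ} (hN : N ≠ 0) {a w : Fin N → ℝ} {S ε : ℝ}
    (ha : ∀ i, |a i| ≤ S) (hw : ∀ i, |w i - 1| ≤ ε) :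
    |(1 / N : ℝ) * ∑ i, a i * (w i - 1)| ≤ S * ε := by
  have hS : 0 ≤ S := (abs_nonneg _).trans (ha ⟨0, Nat.pos_of_ne_zero hN⟩)
  calc |(1 / N : ℝ) * ∑ i, a i * (w i - 1)| ≤ 1 / N * ∑ _i : Fin N, S * ε := by
        rw [abs_mul, abs_of_nonneg (by positivity)]
        gcongr
        refine (Finset.abs_sum_le_sum_abs _ _).trans (Finset.sum_le_sum fun i _ => ?_)
        rw [abs_mul]
        exact mul_le_mul (ha i) (hw i) (abs_nonneg _) hS
    _ = S * ε := by
        rw [Finset.sum_const, Finset.card_univ, Fintype.card_fin, nsmul_eq_mul]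
        field_simp

theorem generalized_koksma_general (N : ℕ) (hN : 0 < N)
    (t : Fin N → ℝ) (ht : ∀ i, t i ∈ Icc (0:ℝ) 1)
    (g : ℝ → ℝ) (hgbd : BddAbove ((fun s => |g s|) '' Icc (0:ℝ) 1))
    (hgBV : BoundedVariationOn g (Icc (0:ℝ) 1))
    (F F' : ℝ → ℝ)
    (hF0 : F 0 = 0) (hF1 : F 1 = 1)
    (hFderiv : ∀ s ∈ Icc (0:ℝ) 1, HasDerivAt F (F' s) s)
    (hF'cont : ContinuousOn F' (Icc (0:ℝ) 1))
    (FN : ℝ → ℝ)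
    (hFN : ∀ s, FN s = ((Finset.univ.filter (fun i => t i ≤ s)).card : ℝ) / N)
    (DN : ℝ) (hDN : DN = sSup ((fun s => |FN s - F s|) '' Icc (0:ℝ) 1))
    (C : ℝ) (w : Fin N → ℝ) (hw : ∀ i, |w i - 1| ≤ C * DN) :
    |(∫ s in (0:ℝ)..1, g s * F' s) - (1 / N) * ∑ i, g (t i) * w i| ≤
      ((eVariationOn g (Icc (0:ℝ) 1)).toReal
        + C * sSup ((fun s => |g s|) '' Icc (0:ℝ) 1)) * DN := by
  have hFN_le : ∀ s, |FN s| ≤ 1 := fun s => by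
    rw [hFN, abs_of_nonneg (by positivity), div_le_one (by positivity)]
    exact_mod_cast (Finset.card_filter_le _ _).trans (Finset.card_fin N).le
  obtain ⟨M, hM⟩ := isCompact_Icc.exists_bound_of_continuousOn fun s hs =>
    (hFderiv s hs).continuousAt.continuousWithinAt
  have hdisc : ∀ s ∈ Icc (0:ℝ) 1, |FN s - F s| ≤ DN := fun s hs => by
    refine hDN ▸ le_csSup ⟨1 + M, ?_⟩ ⟨s, hs, rfl⟩
    rintro _ ⟨s, hs, rfl⟩
    exact (abs_sub _ _).trans (add_le_add (hFN_le s) (hM s hs))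
  have hkoksma := abs_integral_sub_mean_le hN.ne' ht hgBV hF0 hF1 hFderiv hF'cont
    fun s hs => hFN s ▸ hdisc s hs
  have hweights := abs_mean_mul_sub_one_le hN.ne' (fun i => le_csSup hgbd ⟨t i, ht i, rfl⟩) hw
  calc |(∫ s in (0:ℝ)..1, g s * F' s) - (1 / N) * ∑ i, g (t i) * w i|
      = |((∫ s in (0:ℝ)..1, g s * F' s) - (1 / N) * ∑ i, g (t i))
          - (1 / N) * ∑ i, g (t i) * (w i - 1)| := by
        congr 1
        simp only [mul_sub, mul_one, Finset.sum_sub_distrib]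
        ring
    _ ≤ _ := (abs_sub _ _).trans (add_le_add hkoksma hweights)
    _ = _ := by ring

/-- Generalized Koksma inequality with nonuniform weights and a nonuniform
C¹ distribution `F` with `0 < c_F < F' < C_F`. -/
theorem generalized_koksma (N : ℕ) (hN : 0 < N)
    (t : Fin N → ℝ) (ht : ∀ i, t i ∈ Icc (0:ℝ) 1)
    (g : ℝ → ℝ) (hgbd : BddAbove ((fun s => |g s|) '' Icc (0:ℝ) 1))
    (hgBV : BoundedVariationOn g (Icc (0:ℝ) 1))
    (F F' : ℝ → ℝ) (cF CF : ℝ) (hcF : 0 < cF)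
    (hF0 : F 0 = 0) (hF1 : F 1 = 1)
    (hFderiv : ∀ s ∈ Icc (0:ℝ) 1, HasDerivAt F (F' s) s)
    (hF'cont : ContinuousOn F' (Icc (0:ℝ) 1))
    (hbnd : ∀ s ∈ Icc (0:ℝ) 1, cF < F' s ∧ F' s < CF)
    (FN : ℝ → ℝ)
    (hFN : ∀ s, FN s = ((Finset.univ.filter (fun i => t i ≤ s)).card : ℝ) / N)
    (DN : ℝ) (hDN : DN = sSup ((fun s => |FN s - F s|) '' Icc (0:ℝ) 1))
    (C : ℝ) (hC : 0 ≤ C) (w : Fin N → ℝ) (hw : ∀ i, |w i - 1| ≤ C * DN) :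
    |(∫ s in (0:ℝ)..1, g s * F' s) - (1 / N) * ∑ i, g (t i) * w i| ≤
      ((eVariationOn g (Icc (0:ℝ) 1)).toReal
        + C * sSup ((fun s => |g s|) '' Icc (0:ℝ) 1)) * DN :=
  generalized_koksma_general N hN t ht g hgbd hgBV F F' hF0 hF1 hFderiv hF'cont FN hFN DN hDN C w hw
end

section
/- Sobolev interpolation inequality: there exist constants c_j depending only on m (and j ≤ m) such that for every g in the Sobolev space W^{m,2}[0,1] and every θ ∈ (0,1], θ^{2j} · ∫₀¹ |g^{(j)}(s)|² ds ≤ c_j · ( ∫₀¹ |g(s)|² ds + θ^{2m} · ∫₀¹ |g^{(m)}(s)|² ds ). -/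
/-!
On an interval of length `L`, the outer thirds contain points where `|g|` is at most its average;
the mean value theorem between them gives a point where `L² |g'|` is bounded by `9 ∫ |g|`, and
from there `g'` moves by at most `∫ |g''|`. Squaring and Cauchy–Schwarz give
`L² ∫ g'² ≤ 162 ∫ g² + 2 L⁴ ∫ g''²`. Cutting `[0, 1]` into pieces of length comparable to `θ`
and rescaling `θ` turns this into `θ² N₁ ≤ (K / ε) N₀ + ε θ⁴ N₂` for every `ε ∈ (0, 1]`, where
`Nᵢ = ∫ |g⁽ⁱ⁾|²`. With `aᵢ = θ²ⁱ Nᵢ` this reads `aᵢ₊₁ ≤ (K / ε) aᵢ + ε aᵢ₊₂`, and choosing `ε`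
small enough to absorb the middle terms step by step yields `aⱼ ≤ c (a₀ + aₘ)`.
-/

open Set MeasureTheory intervalIntegral

theorem sq_integral_le_mul_integral_sq {f : ℝ → ℝ} {u v : ℝ} (huv : u ≤ v)
    (hf : IntervalIntegrable f volume u v)
    (hf2 : IntervalIntegrable (fun x => f x ^ 2) volume u v) :
    (∫ x in u..v, f x) ^ 2 ≤ (v - u) * ∫ x in u..v, f x ^ 2 := by
  rcases huv.eq_or_lt with rfl | huv
  · simp
  -- the variance of `f` about its mean `c` is nonnegative
  set c := (∫ x in u..v, f x) / (v - u)
  have hvar : 0 ≤ ∫ x in u..v, (f x - c) ^ 2 := integral_nonneg huv.le fun _ _ => sq_nonneg _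
  have hexp : ∫ x in u..v, (f x - c) ^ 2 =
      (∫ x in u..v, f x ^ 2) - 2 * c * (∫ x in u..v, f x) + c ^ 2 * (v - u) := by
    have h : (fun x => (f x - c) ^ 2) = fun x => (f x ^ 2 - (2 * c) * f x) + c ^ 2 := by
      ext x; ring
    rw [h, integral_add (hf2.sub (hf.const_mul _)) intervalIntegrable_const,
      integral_sub hf2 (hf.const_mul _), intervalIntegral.integral_const_mul,
      intervalIntegral.integral_const, smul_eq_mul, mul_comm (v - u)]
  have hc : c * (v - u) = ∫ x in u..v, f x := div_mul_cancel₀ _ (sub_pos.2 huv).ne'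
  nlinarith

theorem exists_mem_Ioc_mul_le_integral {f : ℝ → ℝ} {u v : ℝ} (huv : u < v)
    (hf : IntervalIntegrable f volume u v) :
    ∃ x ∈ Ioc u v, (v - u) * f x ≤ ∫ x in u..v, f x := by
  have hvol : volume (Ioc u v) = ENNReal.ofReal (v - u) := Real.volume_Ioc
  obtain ⟨x, hx, hle⟩ := exists_le_setAverage (μ := volume) (s := Ioc u v) (f := f)
    (by simp [hvol, huv]) (by simp [hvol])
    ((intervalIntegrable_iff_integrableOn_Ioc_of_le huv.le).1 hf)
  refine ⟨x, hx, ?_⟩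
  rw [setAverage_eq, Real.volume_real_Ioc_of_le huv.le, smul_eq_mul,
    ← integral_of_le huv.le, inv_mul_eq_div, le_div_iff₀ (sub_pos.2 huv)] at hle
  linarith

theorem sum_integral_arithmetic_partition {f : ℝ → ℝ} {a b L : ℝ} (hL : 0 ≤ L) {n : ℕ}
    (hb : a + n * L = b) (hf : IntervalIntegrable f volume a b) :
    ∑ k ∈ Finset.range n, ∫ t in a + k * L..a + (k + 1) * L, f t = ∫ t in a..b, f t := by
  subst hb
  have := sum_integral_adjacent_intervals (a := fun k : ℕ => a + k * L) (n := n)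
    (f := f) (μ := volume) fun k hk => hf.mono_set ?_
  · simpa using this
  have hk : (k : ℝ) + 1 ≤ n := by exact_mod_cast hk
  have hn : (0 : ℝ) ≤ n * L := by positivity
  rw [uIcc_of_le (by push_cast; nlinarith), uIcc_of_le (by linarith)]
  exact Icc_subset_Icc (by nlinarith [k.cast_nonneg (α := ℝ)]) (by push_cast; nlinarith)

theorem exists_nat_div_le_and_le_two_mul_div {θ ℓ : ℝ} (hθ : 0 < θ) (hθℓ : θ ≤ ℓ) :
    ∃ n : ℕ, 0 < n ∧ ℓ / n ≤ θ ∧ θ ≤ 2 * (ℓ / n) := by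
  have hr : 1 ≤ ℓ / θ := (one_le_div hθ).2 hθℓ
  refine ⟨⌈ℓ / θ⌉₊, Nat.ceil_pos.2 (by linarith), ?_, ?_⟩
  · rw [div_le_iff₀ (by positivity), ← div_le_iff₀' hθ]
    exact Nat.le_ceil _
  · have h := Nat.ceil_lt_add_one (zero_le_one.trans hr)
    rw [mul_div_assoc', le_div_iff₀ (by positivity)]
    rw [div_add_one hθ.ne', lt_div_iff₀ hθ] at h
    nlinarith

theorem mul_le_of_forall_scale_mul_le {A B C P Q θ ε : ℝ} (hQ : 1 ≤ Q) (hε : ε ∈ Ioc 0 1)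
    (h : ∀ t ∈ Ioc (0 : ℝ) 1, (t * θ) ^ 2 * B ≤ P * A + Q * (t * θ) ^ 4 * C) :
    θ ^ 2 * B ≤ P * Q / ε * A + ε * θ ^ 4 * C := by
  have hεQ : 0 < ε / Q := div_pos hε.1 (by linarith)
  have ht : Real.sqrt (ε / Q) ∈ Ioc (0 : ℝ) 1 :=
    ⟨Real.sqrt_pos.2 hεQ, Real.sqrt_le_one.2 ((div_le_one (by linarith)).2 (by linarith [hε.2]))⟩
  have := h _ ht
  rw [mul_pow, mul_pow, Real.sq_sqrt hεQ.le, show Real.sqrt (ε / Q) ^ 4 = (ε / Q) ^ 2 by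
    rw [show 4 = 2 * 2 by rfl, pow_mul, Real.sq_sqrt hεQ.le]] at this
  have hQ0 : Q ≠ 0 := by positivity
  have hε0 : ε ≠ 0 := hε.1.ne'
  calc θ ^ 2 * B = Q / ε * (ε / Q * θ ^ 2 * B) := by field_simp
    _ ≤ Q / ε * (P * A + Q * ((ε / Q) ^ 2 * θ ^ 4) * C) :=
      mul_le_mul_of_nonneg_left this (div_pos (by linarith) hε.1).le
    _ = P * Q / ε * A + ε * θ ^ 4 * C := by field_simp

section Interpolation

variable {F F' F'' : ℝ → ℝ} {a b : ℝ}

theorem hasDerivAt_of_hasDerivWithinAt_Icc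
    (hF : ∀ t ∈ Icc a b, HasDerivWithinAt F (F' t) (Icc a b) t) {t : ℝ} (ht : t ∈ Ioo a b) :
    HasDerivAt F (F' t) t :=
  (hF t (Ioo_subset_Icc_self ht)).hasDerivAt (Icc_mem_nhds ht.1 ht.2)

theorem exists_sq_mul_abs_deriv_le (hab : a < b)
    (hF : ∀ t ∈ Icc a b, HasDerivWithinAt F (F' t) (Icc a b) t) :
    ∃ ξ ∈ Icc a b, (b - a) ^ 2 * |F' ξ| ≤ 9 * ∫ t in a..b, |F t| := by
  have hcont : ContinuousOn F (Icc a b) := fun t ht => (hF t ht).continuousWithinAt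
  have hint : ∀ u v, a ≤ u → u ≤ v → v ≤ b →
      IntervalIntegrable (fun t => |F t|) volume u v := fun u v hu huv hv =>
    (hcont.abs.mono (by simp [uIcc_of_le huv, Icc_subset_Icc hu hv])).intervalIntegrable
  set L := b - a with hL_def
  set u := a + L / 3 with hu_def
  set v := b - L / 3 with hv_def
  have hL : 0 < L := sub_pos.2 hab
  obtain ⟨x, hx, hFx⟩ := exists_mem_Ioc_mul_le_integral (f := fun t => |F t|) (u := a) (v := u)
    (by linarith) (hint _ _ le_rfl (by linarith) (by linarith))
  obtain ⟨y, hy, hFy⟩ := exists_mem_Ioc_mul_le_integral (f := fun t => |F t|) (u := v) (v := b)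
    (by linarith) (hint _ _ (by linarith) (by linarith) le_rfl)
  have hsplit : (∫ t in a..u, |F t|) + (∫ t in v..b, |F t|) ≤ ∫ t in a..b, |F t| := by
    rw [← integral_add_adjacent_intervals (hint a u le_rfl (by linarith) (by linarith))
      (hint u b (by linarith) (by linarith) le_rfl),
      ← integral_add_adjacent_intervals (hint u v (by linarith) (by linarith) (by linarith))
      (hint v b (by linarith) (by linarith) le_rfl)]
    have : 0 ≤ ∫ t in u..v, |F t| := integral_nonneg (by linarith) fun _ _ => abs_nonneg _
    linarith
  have hxy : x < y := by linarith [hx.2, hy.1]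
  obtain ⟨ξ, hξ, hslope⟩ := exists_hasDerivAt_eq_slope F F' hxy
    (hcont.mono (Icc_subset_Icc hx.1.le (by linarith [hy.2])))
    fun t ht => hasDerivAt_of_hasDerivWithinAt_Icc hF
      ⟨by linarith [hx.1, ht.1], by linarith [hy.2, ht.2]⟩
  refine ⟨ξ, ⟨by linarith [hx.1, hξ.1], by linarith [hy.2, hξ.2]⟩, ?_⟩
  have hmvt : (y - x) * |F' ξ| ≤ |F x| + |F y| := by
    rw [hslope, abs_div, abs_of_pos (sub_pos.2 hxy), mul_div_cancel₀ _ (sub_pos.2 hxy).ne']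
    exact (abs_sub _ _).trans_eq (add_comm _ _)
  have hgap : L / 3 ≤ y - x := by linarith [hx.2, hy.1]
  have : L / 3 * (L / 3 * |F' ξ|) ≤ L / 3 * (|F x| + |F y|) :=
    mul_le_mul_of_nonneg_left ((mul_le_mul_of_nonneg_right hgap (abs_nonneg _)).trans hmvt)
      (by positivity)
  rw [show u - a = L / 3 by linarith] at hFx
  rw [show b - v = L / 3 by linarith] at hFy
  nlinarith

theorem abs_sub_le_integral_abs_deriv
    (hF : ∀ t ∈ Icc a b, HasDerivWithinAt F (F' t) (Icc a b) t)
    (hF' : IntervalIntegrable F' volume a b) {x y : ℝ} (hx : x ∈ Icc a b) (hy : y ∈ Icc a b) :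
    |F y - F x| ≤ ∫ t in a..b, |F' t| := by
  wlog hxy : x ≤ y generalizing x y
  · rw [abs_sub_comm]; exact this hy hx (le_of_not_ge hxy)
  have hsub : Icc x y ⊆ Icc a b := Icc_subset_Icc hx.1 hy.2
  rw [← integral_eq_sub_of_hasDerivAt_of_le hxy
    (fun t ht => (hF t (hsub ht)).continuousWithinAt.mono hsub)
    (fun t ht => hasDerivAt_of_hasDerivWithinAt_Icc hF (Ioo_subset_Ioo hx.1 hy.2 ht))
    (hF'.mono_set (by simpa [uIcc_of_le hxy, uIcc_of_le (hx.1.trans hx.2)] using hsub))]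
  exact (abs_integral_le_integral_abs hxy).trans <| integral_mono_interval hx.1 hxy hy.2
    (Filter.Eventually.of_forall fun _ => abs_nonneg _) hF'.abs

theorem sq_mul_integral_deriv_sq_le (hab : a < b)
    (hF : ∀ t ∈ Icc a b, HasDerivWithinAt F (F' t) (Icc a b) t)
    (hF' : ∀ t ∈ Icc a b, HasDerivWithinAt F' (F'' t) (Icc a b) t)
    (hF'' : ContinuousOn F'' (Icc a b)) :
    (b - a) ^ 2 * ∫ t in a..b, F' t ^ 2 ≤
      162 * (∫ t in a..b, F t ^ 2) + 2 * (b - a) ^ 4 * ∫ t in a..b, F'' t ^ 2 := by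
  have hint : ∀ {f : ℝ → ℝ}, ContinuousOn f (Icc a b) → IntervalIntegrable f volume a b :=
    fun hf => hf.intervalIntegrable_of_Icc hab.le
  have hFc : ContinuousOn F (Icc a b) := fun t ht => (hF t ht).continuousWithinAt
  have hF'c : ContinuousOn F' (Icc a b) := fun t ht => (hF' t ht).continuousWithinAt
  have hL : 0 < b - a := sub_pos.2 hab
  set X := ∫ t in a..b, |F t|
  set Y := ∫ t in a..b, |F'' t|
  obtain ⟨ξ, hξ, hFξ⟩ := exists_sq_mul_abs_deriv_le hab hF
  have hpoint : ∀ s ∈ Icc a b, (b - a) ^ 4 * F' s ^ 2 ≤ (9 * X + (b - a) ^ 2 * Y) ^ 2 := by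
    intro s hs
    have hvar := abs_sub_le_integral_abs_deriv hF' (hint hF'') hξ hs
    have hle : (b - a) ^ 2 * |F' s| ≤ 9 * X + (b - a) ^ 2 * Y := by
      nlinarith [abs_sub_abs_le_abs_sub (F' s) (F' ξ)]
    calc (b - a) ^ 4 * F' s ^ 2 = ((b - a) ^ 2 * |F' s|) ^ 2 := by rw [mul_pow, sq_abs]; ring
      _ ≤ _ := pow_le_pow_left₀ (by positivity) hle 2
  have hsum : (b - a) ^ 4 * ∫ t in a..b, F' t ^ 2 ≤ (b - a) * (9 * X + (b - a) ^ 2 * Y) ^ 2 := by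
    have := integral_mono_on hab.le ((hint (f := fun t => F' t ^ 2) (by fun_prop)).const_mul _)
      intervalIntegrable_const hpoint
    rwa [intervalIntegral.integral_const_mul, intervalIntegral.integral_const, smul_eq_mul] at this
  have hX : X ^ 2 ≤ (b - a) * ∫ t in a..b, F t ^ 2 := by
    simpa only [sq_abs] using sq_integral_le_mul_integral_sq hab.le (hint hFc.abs)
      (hint (f := fun t => |F t| ^ 2) (by fun_prop))
  have hY : Y ^ 2 ≤ (b - a) * ∫ t in a..b, F'' t ^ 2 := by
    simpa only [sq_abs] using sq_integral_le_mul_integral_sq hab.le (hint hF''.abs)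
      (hint (f := fun t => |F'' t| ^ 2) (by fun_prop))
  have hsq : (9 * X + (b - a) ^ 2 * Y) ^ 2 ≤ 162 * X ^ 2 + 2 * (b - a) ^ 4 * Y ^ 2 := by
    nlinarith [sq_nonneg (9 * X - (b - a) ^ 2 * Y)]
  refine le_of_mul_le_mul_left ?_ (pow_pos hL 2)
  nlinarith [mul_le_mul_of_nonneg_left hsq hL.le,
    mul_le_mul_of_nonneg_left hX (by positivity : (0 : ℝ) ≤ 162 * (b - a)),
    mul_le_mul_of_nonneg_left hY (by positivity : (0 : ℝ) ≤ 2 * (b - a) ^ 5)]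

theorem mul_integral_deriv_sq_le
    (hF : ∀ t ∈ Icc a b, HasDerivWithinAt F (F' t) (Icc a b) t)
    (hF' : ∀ t ∈ Icc a b, HasDerivWithinAt F' (F'' t) (Icc a b) t)
    (hF'' : ContinuousOn F'' (Icc a b)) {θ : ℝ} (hθ : θ ∈ Ioc 0 (b - a)) :
    θ ^ 2 * ∫ t in a..b, F' t ^ 2 ≤
      648 * (∫ t in a..b, F t ^ 2) + 8 * θ ^ 4 * ∫ t in a..b, F'' t ^ 2 := by
  have hab : a ≤ b := by linarith [hθ.1, hθ.2]
  have hint : ∀ {f : ℝ → ℝ}, ContinuousOn f (Icc a b) → IntervalIntegrable f volume a b :=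
    fun hf => hf.intervalIntegrable_of_Icc hab
  have hFc : ContinuousOn F (Icc a b) := fun t ht => (hF t ht).continuousWithinAt
  have hF'c : ContinuousOn F' (Icc a b) := fun t ht => (hF' t ht).continuousWithinAt
  obtain ⟨n, hn, hLθ, hθL⟩ := exists_nat_div_le_and_le_two_mul_div hθ.1 hθ.2
  set L := (b - a) / n
  have hL : 0 < L := by linarith [hθ.1]
  have hb : a + n * L = b := by
    simp only [L]; field_simp; ring
  have hpiece : ∀ k ∈ Finset.range n, L ^ 2 * ∫ t in a + k * L..a + (k + 1) * L, F' t ^ 2 ≤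
      162 * (∫ t in a + k * L..a + (k + 1) * L, F t ^ 2) +
        2 * L ^ 4 * ∫ t in a + k * L..a + (k + 1) * L, F'' t ^ 2 := by
    intro k hk
    have hk : (k : ℝ) + 1 ≤ n := by exact_mod_cast Finset.mem_range.1 hk
    have hsub : Icc (a + k * L) (a + (k + 1) * L) ⊆ Icc a b :=
      Icc_subset_Icc (by nlinarith [k.cast_nonneg (α := ℝ)]) (by nlinarith)
    have := sq_mul_integral_deriv_sq_le (by nlinarith) (fun t ht => (hF t (hsub ht)).mono hsub)
      (fun t ht => (hF' t (hsub ht)).mono hsub) (hF''.mono hsub)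
    rwa [show a + (k + 1) * L - (a + k * L) = L by ring] at this
  have hsum : L ^ 2 * ∫ t in a..b, F' t ^ 2 ≤
      162 * (∫ t in a..b, F t ^ 2) + 2 * L ^ 4 * ∫ t in a..b, F'' t ^ 2 := by
    have := Finset.sum_le_sum hpiece
    rw [← Finset.mul_sum, Finset.sum_add_distrib, ← Finset.mul_sum, ← Finset.mul_sum] at this
    rwa [sum_integral_arithmetic_partition hL.le hb (hint (by fun_prop)),
      sum_integral_arithmetic_partition hL.le hb (hint (by fun_prop)),
      sum_integral_arithmetic_partition hL.le hb (hint (by fun_prop))] at this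
  have hB : 0 ≤ ∫ t in a..b, F' t ^ 2 := integral_nonneg hab fun _ _ => sq_nonneg _
  have hC : 0 ≤ ∫ t in a..b, F'' t ^ 2 := integral_nonneg hab fun _ _ => sq_nonneg _
  have hθ2 : θ ^ 2 ≤ 4 * L ^ 2 := by nlinarith [hθ.1]
  have hL4 : L ^ 4 ≤ θ ^ 4 := pow_le_pow_left₀ hL.le hLθ 4
  nlinarith [mul_le_mul_of_nonneg_right hθ2 hB, mul_le_mul_of_nonneg_right hL4 hC]

end Interpolation

/-- `a i` stands for `θ ^ (2 * i) * ∫ s in 0..1, (g⁽ⁱ⁾ s) ^ 2`. -/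
def IsEpsInterpolating (K : ℝ) (m : ℕ) (a : ℕ → ℝ) : Prop :=
  (∀ i, 0 ≤ a i) ∧
    ∀ i, i + 2 ≤ m → ∀ ε ∈ Ioc (0 : ℝ) 1, a (i + 1) ≤ K / ε * a i + ε * a (i + 2)

namespace IsEpsInterpolating

variable {K : ℝ} {m : ℕ}

theorem exists_le_mul_zero_add_mul_succ (hK : 1 ≤ K) {j : ℕ} (hj : 1 ≤ j) (hjm : j + 1 ≤ m) :
    ∀ δ ∈ Ioc (0 : ℝ) 1, ∃ C, 0 ≤ C ∧ ∀ a, IsEpsInterpolating K m a →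
      a j ≤ C * a 0 + δ * a (j + 1) := by
  induction j, hj using Nat.le_induction with
  | base =>
    intro δ hδ
    exact ⟨K / δ, by have := hδ.1; positivity, fun a ha => ha.2 0 hjm δ hδ⟩
  | succ j hj ih =>
    intro δ hδ
    obtain ⟨ε, rfl⟩ : ∃ ε, δ = 2 * ε := ⟨δ / 2, by ring⟩
    have hε : ε ∈ Ioc (0 : ℝ) 1 := ⟨by linarith [hδ.1], by linarith [hδ.2]⟩
    have hKε : 0 ≤ K / ε := by have := hε.1; positivity
    -- the induction hypothesis at `ε / (2 * K)` lets the left side absorb its `a (j + 1)` term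
    have hε' : ε / (2 * K) ∈ Ioc (0 : ℝ) 1 :=
      ⟨by have := hε.1; positivity, (div_le_one (by linarith)).2 (by linarith [hε.2])⟩
    obtain ⟨C, hC, hC'⟩ := ih (by omega) _ hε'
    refine ⟨2 * (K / ε) * C, by positivity, fun a ha => ?_⟩
    have h1 := ha.2 j (by omega) ε hε
    have h2 : K / ε * a j ≤ K / ε * C * a 0 + 1 / 2 * a (j + 1) := by
      have hhalf : K / ε * (ε / (2 * K)) = 1 / 2 := by field_simp [hε.1.ne']
      have := mul_le_mul_of_nonneg_left (hC' a ha) hKε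
      rwa [mul_add, ← mul_assoc, ← mul_assoc, hhalf] at this
    linarith

theorem exists_le_mul_zero_add_last (hK : 1 ≤ K) {j : ℕ} (hj : j ≤ m) :
    ∃ c, 0 < c ∧ ∀ a, IsEpsInterpolating K m a → a j ≤ c * (a 0 + a m) := by
  induction hj using Nat.decreasingInduction with
  | self => exact ⟨1, one_pos, fun a ha => by linarith [ha.1 0]⟩
  | of_succ j hjm ih =>
    rcases Nat.eq_zero_or_pos j with rfl | hj
    · exact ⟨1, one_pos, fun a ha => by linarith [ha.1 m]⟩
    obtain ⟨C, hC, hC'⟩ := exists_le_mul_zero_add_mul_succ hK hj hjm 1 ⟨one_pos, le_rfl⟩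
    obtain ⟨c, hc, hc'⟩ := ih
    refine ⟨C + c, by positivity, fun a ha => ?_⟩
    have := mul_nonneg hC (ha.1 m)
    linarith [hC' a ha, hc' a ha]

end IsEpsInterpolating

namespace ContDiffOn

variable {m : ℕ} {g : ℝ → ℝ} {a b : ℝ}

theorem hasDerivWithinAt_iteratedDerivWithin (hg : ContDiffOn ℝ m g (Icc a b))
    (hab : a < b) {j : ℕ} (hj : j < m) {t : ℝ} (ht : t ∈ Icc a b) :
    HasDerivWithinAt (iteratedDerivWithin j g (Icc a b))
      (iteratedDerivWithin (j + 1) g (Icc a b) t) (Icc a b) t := by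
  rw [iteratedDerivWithin_succ]
  exact (hg.differentiableOn_iteratedDerivWithin (mod_cast hj) (uniqueDiffOn_Icc hab)
    t ht).hasDerivWithinAt

theorem mul_integral_iteratedDerivWithin_sq_le (hg : ContDiffOn ℝ m g (Icc a b))
    {i : ℕ} (hi : i + 2 ≤ m) {θ ε : ℝ} (hθ : θ ∈ Ioc 0 (b - a)) (hε : ε ∈ Ioc (0 : ℝ) 1) :
    θ ^ 2 * ∫ s in a..b, iteratedDerivWithin (i + 1) g (Icc a b) s ^ 2 ≤
      5184 / ε * (∫ s in a..b, iteratedDerivWithin i g (Icc a b) s ^ 2) +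
        ε * θ ^ 4 * ∫ s in a..b, iteratedDerivWithin (i + 2) g (Icc a b) s ^ 2 := by
  have hab : a < b := by linarith [hθ.1, hθ.2]
  rw [show (5184 : ℝ) = 648 * 8 by norm_num]
  refine mul_le_of_forall_scale_mul_le (by norm_num) hε fun t ht => ?_
  refine mul_integral_deriv_sq_le
    (fun s hs => hg.hasDerivWithinAt_iteratedDerivWithin hab (by omega) hs)
    (fun s hs => hg.hasDerivWithinAt_iteratedDerivWithin hab (by omega) hs)
    (hg.continuousOn_iteratedDerivWithin (mod_cast hi) (uniqueDiffOn_Icc hab))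
    ⟨mul_pos ht.1 hθ.1, ?_⟩
  nlinarith [ht.1, ht.2, hθ.1, hθ.2]

theorem isEpsInterpolating (hg : ContDiffOn ℝ m g (Icc a b)) {θ : ℝ} (hθ : θ ∈ Ioc 0 (b - a)) :
    IsEpsInterpolating 5184 m
      fun i => θ ^ (2 * i) * ∫ s in a..b, iteratedDerivWithin i g (Icc a b) s ^ 2 := by
  have hab : a ≤ b := by linarith [hθ.1, hθ.2]
  refine ⟨fun i => mul_nonneg (by have := hθ.1; positivity)
    (integral_nonneg hab fun _ _ => sq_nonneg _), fun i hi ε hε => ?_⟩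
  have := mul_le_mul_of_nonneg_left (hg.mul_integral_iteratedDerivWithin_sq_le hi hθ hε)
    (by have := hθ.1; positivity : 0 ≤ θ ^ (2 * i))
  have e1 : θ ^ (2 * (i + 1)) = θ ^ (2 * i) * θ ^ 2 := by ring
  have e2 : θ ^ (2 * (i + 2)) = θ ^ (2 * i) * θ ^ 4 := by ring
  simp only [e1, e2]
  linear_combination this

end ContDiffOn

/-- Sobolev interpolation inequality: there is a constant `c` depending only on
`m` and `j ≤ m` such that for all `g` smooth of order `m` on `[0,1]` and `θ ∈ (0,1]`,
`θ^(2j) ∫ |g^(j)|² ≤ c (∫ |g|² + θ^(2m) ∫ |g^(m)|²)`. -/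
theorem sobolev_interpolation (m j : ℕ) (hj : j ≤ m) :
    ∃ c : ℝ, 0 < c ∧ ∀ g : ℝ → ℝ, ContDiffOn ℝ m g (Icc (0:ℝ) 1) →
      ∀ θ ∈ Ioc (0:ℝ) 1,
      θ ^ (2 * j) * ∫ s in (0:ℝ)..1, (iteratedDerivWithin j g (Icc (0:ℝ) 1) s) ^ 2 ≤
        c * ((∫ s in (0:ℝ)..1, (g s) ^ 2) +
          θ ^ (2 * m) * ∫ s in (0:ℝ)..1, (iteratedDerivWithin m g (Icc (0:ℝ) 1) s) ^ 2) := by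
  obtain ⟨c, hc, hchain⟩ := IsEpsInterpolating.exists_le_mul_zero_add_last (K := 5184) (m := m)
    (by norm_num) hj
  refine ⟨c, hc, fun g hg θ hθ => ?_⟩
  simpa using hchain _ (hg.isEpsInterpolating (by simpa using hθ))
end

section
/- Lower discrete ℓ² bound via discrepancy: under the same hypotheses, for every δ ∈ (0,1/2) such that c_F > c₁·(D*_N)^δ + D*_N, one has (c_F − c₁·(D*_N)^δ − D*_N)·∫₀¹ g(s)² ds ≤ (1/N)·Σ_{i=1}^N g(t_i)² + c₁·(D*_N)^{m(1−2δ)}·∫₀¹ |g^{(m)}(s)|² ds. -/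
/-!
Koksma's inequality applied to `g²` bounds `∫ g² dF - (1/N) ∑ g(tᵢ)²` by `D ∫ |(g²)'|`, and
`|(g²)'| = 2|g g'| ≤ g² + g'²`. The term `D ∫ g'²` is then absorbed by the interpolation inequality
`∫ g'² ≤ C (ε⁻¹ ∫ g² + ε^(m-1) ∫ (g⁽ᵐ⁾)²)` with `ε = D^(1-δ)`, and `cF ∫ g² ≤ ∫ g² dF`. The
interpolation inequality is proved for `m = 2` on a short interval via the mean value theorem,
transferred to `[0, 1]` by subdividing, and extended to all `m` by induction.
-/

open Set MeasureTheory intervalIntegral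

theorem sq_integral_le_mul_integral_sq_s10 {u : ℝ → ℝ} {a b : ℝ} (hab : a ≤ b)
    (hu : ContinuousOn u (Icc a b)) :
    (∫ s in a..b, u s) ^ 2 ≤ (b - a) * ∫ s in a..b, u s ^ 2 := by
  have hu1 : IntervalIntegrable u volume a b := hu.intervalIntegrable_of_Icc hab
  have hu2 : IntervalIntegrable (fun s => u s ^ 2) volume a b :=
    (hu.pow 2).intervalIntegrable_of_Icc hab
  -- `x ↦ ∫ (u - x)²` is a nonnegative quadratic polynomial, so its discriminant is `≤ 0`.
  have hquad : ∀ x : ℝ, 0 ≤ (b - a) * (x * x) + (-2 * ∫ s in a..b, u s) * x +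
      ∫ s in a..b, u s ^ 2 := by
    intro x
    have hexp : ∫ s in a..b, (u s - x) ^ 2 =
        (b - a) * (x * x) + (-2 * ∫ s in a..b, u s) * x + ∫ s in a..b, u s ^ 2 := by
      simp only [sub_sq, integral_add (hu2.sub (hu1.const_mul _ |>.mul_const _))
        intervalIntegrable_const, integral_sub hu2 (hu1.const_mul _ |>.mul_const _),
        intervalIntegral.integral_mul_const, intervalIntegral.integral_const_mul,
        intervalIntegral.integral_const, smul_eq_mul]
      ring
    rw [← hexp]
    exact integral_nonneg hab fun s _ => sq_nonneg _
  have := discrim_le_zero hquad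
  rw [discrim] at this
  nlinarith

theorem integral_eq_sub_of_hasDerivWithinAt_Icc {f f' : ℝ → ℝ} {a b : ℝ} (hab : a ≤ b)
    (hf : ∀ x ∈ Icc a b, HasDerivWithinAt f (f' x) (Icc a b) x)
    (hf' : IntervalIntegrable f' volume a b) :
    ∫ x in a..b, f' x = f b - f a :=
  integral_eq_sub_of_hasDerivAt_of_le hab (fun x hx => (hf x hx).continuousWithinAt)
    (fun x hx => (hf x (Ioo_subset_Icc_self hx)).hasDerivAt (Icc_mem_nhds hx.1 hx.2)) hf'

theorem abs_sub_le_integral_abs_deriv_s10 {f f' : ℝ → ℝ} {a b x y : ℝ}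
    (hf : ∀ s ∈ Icc a b, HasDerivWithinAt f (f' s) (Icc a b) s)
    (hf' : ContinuousOn f' (Icc a b)) (hx : x ∈ Icc a b) (hy : y ∈ Icc a b) :
    |f x - f y| ≤ ∫ s in a..b, |f' s| := by
  wlog hyx : y ≤ x generalizing x y
  · rw [abs_sub_comm]
    exact this hy hx (le_of_not_ge hyx)
  have hsub : Icc y x ⊆ Icc a b := Icc_subset_Icc hy.1 hx.2
  rw [← integral_eq_sub_of_hasDerivWithinAt_Icc hyx (fun s hs => (hf s (hsub hs)).mono hsub)
    ((hf'.mono hsub).intervalIntegrable_of_Icc hyx)]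
  calc |∫ s in y..x, f' s| ≤ ∫ s in y..x, |f' s| := abs_integral_le_integral_abs hyx
    _ ≤ ∫ s in a..b, |f' s| :=
      integral_mono_interval hy.1 hyx hx.2 (.of_forall fun _ => abs_nonneg _)
        (hf'.abs.intervalIntegrable_of_Icc (hy.1.trans (hyx.trans hx.2)))

theorem exists_mem_Icc_abs_mul_le_integral_abs {f : ℝ → ℝ} {a b c d : ℝ} (hcd : c < d)
    (hac : a ≤ c) (hdb : d ≤ b) (hf : ContinuousOn f (Icc a b)) :
    ∃ p ∈ Icc c d, |f p| * (d - c) ≤ ∫ s in a..b, |f s| := by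
  have hsub : Icc c d ⊆ Icc a b := Icc_subset_Icc hac hdb
  obtain ⟨p, hp, hmin⟩ :=
    isCompact_Icc.exists_isMinOn (nonempty_Icc.2 hcd.le) (hf.abs.mono hsub)
  refine ⟨p, hp, ?_⟩
  calc |f p| * (d - c) = ∫ _ in c..d, |f p| := by simp [mul_comm]
    _ ≤ ∫ s in c..d, |f s| :=
      integral_mono_on hcd.le intervalIntegrable_const
        ((hf.abs.mono hsub).intervalIntegrable_of_Icc hcd.le) fun s hs => hmin hs
    _ ≤ ∫ s in a..b, |f s| :=
      integral_mono_interval hac hcd.le hdb (.of_forall fun _ => abs_nonneg _)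
        (hf.abs.intervalIntegrable_of_Icc (hac.trans (hcd.le.trans hdb)))

theorem exists_abs_deriv_mul_sq_le {f f' : ℝ → ℝ} {a b : ℝ} (hab : a < b)
    (hf : ∀ s ∈ Icc a b, HasDerivWithinAt f (f' s) (Icc a b) s) :
    ∃ ξ ∈ Icc a b, |f' ξ| * (b - a) ^ 2 ≤ 18 * ∫ s in a..b, |f s| := by
  -- `p` and `q` lie in the outer thirds of `[a, b]`, where `|f|` is at most three times its mean;
  -- the mean value theorem on `[p, q]` does the rest.
  set L := b - a
  have hL : 0 < L := sub_pos.2 hab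
  have hfc : ContinuousOn f (Icc a b) := fun s hs => (hf s hs).continuousWithinAt
  obtain ⟨p, hp, hfp⟩ := exists_mem_Icc_abs_mul_le_integral_abs (c := a) (d := a + L / 3)
    (by linarith) le_rfl (by linarith) hfc
  obtain ⟨q, hq, hfq⟩ := exists_mem_Icc_abs_mul_le_integral_abs (c := b - L / 3) (d := b)
    (by linarith) (by linarith) le_rfl hfc
  have hpq : L / 3 ≤ q - p := by linarith [hp.2, hq.1]
  have hpq' : Icc p q ⊆ Icc a b := Icc_subset_Icc hp.1 hq.2
  obtain ⟨ξ, hξ, hslope⟩ := exists_hasDerivAt_eq_slope f f' (by linarith)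
    (hfc.mono hpq') fun x hx =>
      (hf x (hpq' (Ioo_subset_Icc_self hx))).hasDerivAt
        (Icc_mem_nhds (hp.1.trans_lt hx.1) (hx.2.trans_le hq.2))
  refine ⟨ξ, hpq' (Ioo_subset_Icc_self hξ), ?_⟩
  have hmvt : |f' ξ| * (q - p) ≤ |f q| + |f p| := by
    rw [hslope, abs_div, abs_of_pos (by linarith : 0 < q - p), div_mul_cancel₀ _ (by linarith)]
    exact abs_sub _ _
  have hpq3 : |f' ξ| * L ≤ 3 * (|f' ξ| * (q - p)) := by
    nlinarith [abs_nonneg (f' ξ)]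
  have hfp' : |f p| * L ≤ 3 * ∫ s in a..b, |f s| := by linarith
  have hfq' : |f q| * L ≤ 3 * ∫ s in a..b, |f s| := by linarith
  nlinarith

theorem integral_sq_deriv_le_Icc {g₀ g₁ g₂ : ℝ → ℝ} {a b : ℝ} (hab : a < b)
    (h₀₁ : ∀ s ∈ Icc a b, HasDerivWithinAt g₀ (g₁ s) (Icc a b) s)
    (h₁₂ : ∀ s ∈ Icc a b, HasDerivWithinAt g₁ (g₂ s) (Icc a b) s)
    (hg₂ : ContinuousOn g₂ (Icc a b)) :
    ∫ s in a..b, g₁ s ^ 2 ≤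
      648 / (b - a) ^ 2 * (∫ s in a..b, g₀ s ^ 2) + 2 * (b - a) ^ 2 * ∫ s in a..b, g₂ s ^ 2 := by
  set L := b - a
  have hL : 0 < L := sub_pos.2 hab
  have hg₀ : ContinuousOn g₀ (Icc a b) := fun s hs => (h₀₁ s hs).continuousWithinAt
  have hg₁ : ContinuousOn g₁ (Icc a b) := fun s hs => (h₁₂ s hs).continuousWithinAt
  set I₀ := ∫ s in a..b, |g₀ s|
  set I₂ := ∫ s in a..b, |g₂ s|
  set M := 18 * I₀ / L ^ 2 + I₂
  obtain ⟨ξ, hξ, hg₁ξ⟩ := exists_abs_deriv_mul_sq_le hab h₀₁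
  have hbound : ∀ x ∈ Icc a b, |g₁ x| ≤ M := by
    intro x hx
    have hξ' : |g₁ ξ| ≤ 18 * I₀ / L ^ 2 := by rwa [le_div_iff₀ (by positivity)]
    have := abs_sub_le_integral_abs_deriv_s10 h₁₂ hg₂ hx hξ
    have := abs_sub_abs_le_abs_sub (g₁ x) (g₁ ξ)
    linarith
  have hCS₀ : I₀ ^ 2 ≤ L * ∫ s in a..b, g₀ s ^ 2 := by
    simpa only [sq_abs] using sq_integral_le_mul_integral_sq_s10 hab.le hg₀.abs
  have hCS₂ : I₂ ^ 2 ≤ L * ∫ s in a..b, g₂ s ^ 2 := by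
    simpa only [sq_abs] using sq_integral_le_mul_integral_sq_s10 hab.le hg₂.abs
  calc ∫ s in a..b, g₁ s ^ 2 ≤ ∫ _ in a..b, M ^ 2 :=
        integral_mono_on hab.le ((hg₁.pow 2).intervalIntegrable_of_Icc hab.le)
          intervalIntegrable_const fun x hx => by
            simpa only [sq_abs] using pow_le_pow_left₀ (abs_nonneg _) (hbound x hx) 2
    _ = L * M ^ 2 := by rw [intervalIntegral.integral_const, smul_eq_mul]
    _ ≤ L * (2 * (18 * I₀ / L ^ 2) ^ 2 + 2 * I₂ ^ 2) := by
        gcongr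
        nlinarith [sq_nonneg (18 * I₀ / L ^ 2 - I₂)]
    _ = 648 / L ^ 3 * I₀ ^ 2 + 2 * L * I₂ ^ 2 := by field_simp; ring
    _ ≤ 648 / L ^ 3 * (L * ∫ s in a..b, g₀ s ^ 2) + 2 * L * (L * ∫ s in a..b, g₂ s ^ 2) := by
        gcongr
    _ = 648 / L ^ 2 * (∫ s in a..b, g₀ s ^ 2) + 2 * L ^ 2 * ∫ s in a..b, g₂ s ^ 2 := by
        field_simp

theorem sum_integral_div_nat {u : ℝ → ℝ} {n : ℕ} (hn : n ≠ 0)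
    (hu : IntervalIntegrable u volume 0 1) :
    ∑ j ∈ Finset.range n, ∫ s in (j / n : ℝ)..((j + 1) / n), u s = ∫ s in (0:ℝ)..1, u s := by
  have hn' : (n : ℝ) ≠ 0 := Nat.cast_ne_zero.2 hn
  have hmem : ∀ k ≤ n, (k / n : ℝ) ∈ uIcc 0 1 := fun k hk => by
    rw [uIcc_of_le zero_le_one]
    exact ⟨by positivity, div_le_one_of_le₀ (by exact_mod_cast hk) (Nat.cast_nonneg n)⟩
  have := sum_integral_adjacent_intervals (a := fun k : ℕ => (k / n : ℝ)) (f := u)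
    fun k hk => hu.mono_set (uIcc_subset_uIcc (hmem k hk.le) (hmem (k + 1) hk))
  simpa [hn'] using this

theorem integral_sq_deriv_le_nat {g₀ g₁ g₂ : ℝ → ℝ} {n : ℕ} (hn : n ≠ 0)
    (h₀₁ : ∀ s ∈ Icc (0:ℝ) 1, HasDerivWithinAt g₀ (g₁ s) (Icc 0 1) s)
    (h₁₂ : ∀ s ∈ Icc (0:ℝ) 1, HasDerivWithinAt g₁ (g₂ s) (Icc 0 1) s)
    (hg₂ : ContinuousOn g₂ (Icc 0 1)) :
    ∫ s in (0:ℝ)..1, g₁ s ^ 2 ≤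
      648 * n ^ 2 * (∫ s in (0:ℝ)..1, g₀ s ^ 2) + 2 / n ^ 2 * ∫ s in (0:ℝ)..1, g₂ s ^ 2 := by
  have hn' : (0 : ℝ) < n := Nat.cast_pos.2 (Nat.pos_of_ne_zero hn)
  have hint : ∀ {u : ℝ → ℝ}, ContinuousOn u (Icc 0 1) →
      IntervalIntegrable (fun s => u s ^ 2) volume 0 1 :=
    fun hu => (hu.pow 2).intervalIntegrable_of_Icc zero_le_one
  have hg₀ : ContinuousOn g₀ (Icc 0 1) := fun s hs => (h₀₁ s hs).continuousWithinAt
  have hg₁ : ContinuousOn g₁ (Icc 0 1) := fun s hs => (h₁₂ s hs).continuousWithinAt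
  rw [← sum_integral_div_nat hn (hint hg₀), ← sum_integral_div_nat hn (hint hg₁),
    ← sum_integral_div_nat hn (hint hg₂), Finset.mul_sum, Finset.mul_sum,
    ← Finset.sum_add_distrib]
  refine Finset.sum_le_sum fun j hj => ?_
  have hj : (j + 1 : ℝ) ≤ n := by exact_mod_cast Finset.mem_range.1 hj
  have hsub : Icc (j / n : ℝ) ((j + 1) / n) ⊆ Icc 0 1 :=
    Icc_subset_Icc (by positivity) (div_le_one_of_le₀ hj hn'.le)
  have hlen : ((j + 1) / n - j / n : ℝ) = 1 / n := by ring
  have := integral_sq_deriv_le_Icc (a := j / n) (b := (j + 1) / n)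
    (div_lt_div_of_pos_right (lt_add_one _) hn')
    (fun s hs => (h₀₁ s (hsub hs)).mono hsub) (fun s hs => (h₁₂ s (hsub hs)).mono hsub)
    (hg₂.mono hsub)
  rwa [hlen, one_div, inv_pow, div_inv_eq_mul, ← div_eq_mul_inv] at this

theorem integral_sq_deriv_le {g₀ g₁ g₂ : ℝ → ℝ} {ε : ℝ} (hε₀ : 0 < ε) (hε₁ : ε ≤ 1)
    (h₀₁ : ∀ s ∈ Icc (0:ℝ) 1, HasDerivWithinAt g₀ (g₁ s) (Icc 0 1) s)
    (h₁₂ : ∀ s ∈ Icc (0:ℝ) 1, HasDerivWithinAt g₁ (g₂ s) (Icc 0 1) s)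
    (hg₂ : ContinuousOn g₂ (Icc 0 1)) :
    ∫ s in (0:ℝ)..1, g₁ s ^ 2 ≤
      2592 / ε * (∫ s in (0:ℝ)..1, g₀ s ^ 2) + 2 * ε * ∫ s in (0:ℝ)..1, g₂ s ^ 2 := by
  -- Subdivide into `n = ⌈1 / √ε⌉` pieces, so that `1 ≤ n ^ 2 * ε ≤ 4`.
  set n := ⌈(√ε)⁻¹⌉₊
  have hr : 0 < √ε := Real.sqrt_pos.2 hε₀
  have hr₁ : √ε ≤ 1 := Real.sqrt_le_one.2 hε₁
  have hlow : 1 ≤ n * √ε := (inv_le_iff_one_le_mul₀ hr).1 (Nat.le_ceil _)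
  have hup : n * √ε ≤ 2 := by
    have := Nat.ceil_lt_add_one (inv_nonneg.2 hr.le)
    have : (√ε)⁻¹ * √ε = 1 := inv_mul_cancel₀ hr.ne'
    nlinarith
  have hsq : (n * √ε) ^ 2 = n ^ 2 * ε := by rw [mul_pow, Real.sq_sqrt hε₀.le]
  have hn : n ≠ 0 := by rintro h; simp [h] at hlow; linarith
  have hn' : (0 : ℝ) < n := Nat.cast_pos.2 (Nat.pos_of_ne_zero hn)
  have hA : 0 ≤ ∫ s in (0:ℝ)..1, g₀ s ^ 2 := integral_nonneg zero_le_one fun _ _ => sq_nonneg _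
  have hB : 0 ≤ ∫ s in (0:ℝ)..1, g₂ s ^ 2 := integral_nonneg zero_le_one fun _ _ => sq_nonneg _
  refine (integral_sq_deriv_le_nat hn h₀₁ h₁₂ hg₂).trans (add_le_add ?_ ?_)
  · refine mul_le_mul_of_nonneg_right ?_ hA
    rw [le_div_iff₀ hε₀]
    nlinarith
  · refine mul_le_mul_of_nonneg_right ?_ hB
    rw [div_le_iff₀ (by positivity)]
    nlinarith

def IsDerivChainOn (G : ℕ → ℝ → ℝ) (m : ℕ) (s : Set ℝ) : Prop :=
  (∀ k < m, ∀ x ∈ s, HasDerivWithinAt (G k) (G (k + 1) x) s x) ∧ ContinuousOn (G m) s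

theorem IsDerivChainOn.shift {G : ℕ → ℝ → ℝ} {m : ℕ} {s : Set ℝ}
    (hG : IsDerivChainOn G (m + 1) s) : IsDerivChainOn (fun k => G (k + 1)) m s :=
  ⟨fun k hk => hG.1 (k + 1) (by omega), hG.2⟩

theorem IsDerivChainOn.continuousOn {G : ℕ → ℝ → ℝ} {m : ℕ} {s : Set ℝ}
    (hG : IsDerivChainOn G m s) {k : ℕ} (hk : k ≤ m) : ContinuousOn (G k) s := by
  rcases hk.lt_or_eq with hk | rfl
  · exact fun x hx => (hG.1 k hk x hx).continuousWithinAt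
  · exact hG.2

-- The Sobolev interpolation inequality; it is the source of the constant `c₁`.
theorem exists_integral_sq_deriv_le (m : ℕ) :
    ∃ C : ℝ, 1 ≤ C ∧ ∀ G : ℕ → ℝ → ℝ, IsDerivChainOn G (m + 1) (Icc 0 1) →
      ∀ ε : ℝ, 0 < ε → ε ≤ 1 →
        ∫ s in (0:ℝ)..1, G 1 s ^ 2 ≤
          C / ε * (∫ s in (0:ℝ)..1, G 0 s ^ 2) + C * ε ^ m * ∫ s in (0:ℝ)..1, G (m + 1) s ^ 2 := by
  induction m with
  | zero =>
    refine ⟨1, le_rfl, fun G _ ε hε _ => ?_⟩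
    have : 0 ≤ 1 / ε * ∫ s in (0:ℝ)..1, G 0 s ^ 2 :=
      mul_nonneg (by positivity) (integral_nonneg zero_le_one fun _ _ => sq_nonneg _)
    simp only [pow_zero, mul_one, one_mul, zero_add]
    linarith
  | succ m ih =>
    obtain ⟨C, hC, hCG⟩ := ih
    refine ⟨27648 * C, by linarith, fun G hG ε hε₀ hε₁ => ?_⟩
    set N₀ := ∫ s in (0:ℝ)..1, G 0 s ^ 2
    set N₁ := ∫ s in (0:ℝ)..1, G 1 s ^ 2
    set N₂ := ∫ s in (0:ℝ)..1, G 2 s ^ 2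
    set Nₘ := ∫ s in (0:ℝ)..1, G (m + 2) s ^ 2
    have hNₘ : 0 ≤ Nₘ := integral_nonneg zero_le_one fun _ _ => sq_nonneg _
    have hshift : N₂ ≤ C / ε * N₁ + C * ε ^ m * Nₘ := hCG _ hG.shift ε hε₀ hε₁
    -- the step `ε / (8 C)` makes the `N₂` term absorbable into the left-hand side
    have hstep : N₁ ≤ 2592 / (ε / (8 * C)) * N₀ + 2 * (ε / (8 * C)) * N₂ :=
      integral_sq_deriv_le (by positivity)
      (by rw [div_le_one (by positivity)]; linarith)
      (hG.1 0 (by omega)) (hG.1 1 (by omega)) (hG.continuousOn (by omega))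
    have hε : 2 * (ε / (8 * C)) * N₂ ≤ N₁ / 4 + ε ^ (m + 1) / 4 * Nₘ := by
      calc 2 * (ε / (8 * C)) * N₂ ≤ 2 * (ε / (8 * C)) * (C / ε * N₁ + C * ε ^ m * Nₘ) := by
            gcongr
        _ = N₁ / 4 + ε ^ (m + 1) / 4 * Nₘ := by field_simp; ring
    have h2592 : 2592 / (ε / (8 * C)) * N₀ = 20736 * (C / ε * N₀) := by field_simp; ring
    have hY : 0 ≤ ε ^ (m + 1) * Nₘ := by positivity
    have hεₘ : ε ^ (m + 1) * Nₘ ≤ C * (ε ^ (m + 1) * Nₘ) := le_mul_of_one_le_left hY hC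
    calc N₁ ≤ 27648 * (C / ε * N₀) + 27648 * (C * (ε ^ (m + 1) * Nₘ)) := by linarith
      _ = _ := by ring

theorem ContDiffOn.isDerivChainOn_iteratedDerivWithin {g : ℝ → ℝ} {s : Set ℝ} {m : ℕ}
    (hg : ContDiffOn ℝ m g s) (hs : UniqueDiffOn ℝ s) :
    IsDerivChainOn (fun k => iteratedDerivWithin k g s) m s := by
  refine ⟨fun k hk x hx => ?_, hg.continuousOn_iteratedDerivWithin le_rfl hs⟩
  show HasDerivWithinAt _ (iteratedDerivWithin (k + 1) g s x) s x
  rw [iteratedDerivWithin_succ]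
  exact (hg.differentiableOn_iteratedDerivWithin (by exact_mod_cast hk) hs x hx).hasDerivWithinAt

noncomputable def empiricalCDF {N : ℕ} (t : Fin N → ℝ) (s : ℝ) : ℝ :=
  ((Finset.univ.filter (fun i => t i ≤ s)).card : ℝ) / N

theorem empiricalCDF_nonneg {N : ℕ} (t : Fin N → ℝ) (s : ℝ) : 0 ≤ empiricalCDF t s := by
  unfold empiricalCDF
  positivity

theorem empiricalCDF_le_one {N : ℕ} (t : Fin N → ℝ) (s : ℝ) : empiricalCDF t s ≤ 1 :=
  div_le_one_of_le₀ (by simpa using Finset.card_filter_le (Finset.univ : Finset (Fin N)) _)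
    (Nat.cast_nonneg N)

theorem monotone_empiricalCDF {N : ℕ} (t : Fin N → ℝ) : Monotone (empiricalCDF t) :=
  fun _ _ hrs => div_le_div_of_nonneg_right
    (Nat.cast_le.2 <| Finset.card_le_card <|
      Finset.monotone_filter_right _ fun _ _ hi => hi.trans hrs)
    (Nat.cast_nonneg N)

theorem abs_empiricalCDF_sub_le_sSup {N : ℕ} (t : Fin N → ℝ) {F : ℝ → ℝ} {K : Set ℝ}
    (hK : IsCompact K) (hF : ContinuousOn F K) {s : ℝ} (hs : s ∈ K) :
    |empiricalCDF t s - F s| ≤ sSup ((fun s => |empiricalCDF t s - F s|) '' K) := by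
  obtain ⟨M, hM⟩ := hK.exists_bound_of_continuousOn hF
  refine le_csSup ⟨1 + M, ?_⟩ (mem_image_of_mem _ hs)
  rintro _ ⟨x, hx, rfl⟩
  have := abs_sub (empiricalCDF t x) (F x)
  rw [abs_of_nonneg (empiricalCDF_nonneg t x)] at this
  linarith [empiricalCDF_le_one t x, hM x hx, Real.norm_eq_abs (F x)]

theorem integral_indicator_Ici {f : ℝ → ℝ} {a b r : ℝ} (hr : r ∈ Icc a b) :
    ∫ s in a..b, (Ici r).indicator f s = ∫ s in r..b, f s := by
  rw [integral_of_le (hr.1.trans hr.2), integral_of_le hr.2,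
    MeasureTheory.integral_indicator measurableSet_Ici, Measure.restrict_restrict measurableSet_Ici]
  refine setIntegral_congr_set ((Ioi_ae_eq_Ici.symm.inter (ae_eq_refl (Ioc a b))).trans ?_)
  rw [inter_comm, Ioc_inter_Ioi, max_eq_right hr.1]
  exact ae_eq_refl _

theorem integral_deriv_mul_empiricalCDF {f f' : ℝ → ℝ} {N : ℕ} (hN : N ≠ 0)
    {t : Fin N → ℝ} (ht : ∀ i, t i ∈ Icc (0:ℝ) 1)
    (hf : ∀ s ∈ Icc (0:ℝ) 1, HasDerivWithinAt f (f' s) (Icc 0 1) s)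
    (hf' : ContinuousOn f' (Icc 0 1)) :
    ∫ s in (0:ℝ)..1, f' s * empiricalCDF t s = f 1 - 1 / N * ∑ i, f (t i) := by
  have hf'i : IntervalIntegrable f' volume 0 1 := hf'.intervalIntegrable_of_Icc zero_le_one
  have hind : ∀ i, IntervalIntegrable ((Ici (t i)).indicator f') volume 0 1 := fun i => by
    rw [intervalIntegrable_iff_integrableOn_Ioc_of_le zero_le_one] at hf'i ⊢
    exact hf'i.indicator measurableSet_Ici
  have hpoint : ∀ s, f' s * empiricalCDF t s = 1 / N * ∑ i, (Ici (t i)).indicator f' s := by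
    intro s
    simp only [indicator_apply, mem_Ici, Finset.sum_ite, Finset.sum_const_zero, add_zero,
      Finset.sum_const, nsmul_eq_mul, empiricalCDF]
    ring
  have hFTC : ∀ i, ∫ s in (0:ℝ)..1, (Ici (t i)).indicator f' s = f 1 - f (t i) := fun i => by
    have hsub : Icc (t i) 1 ⊆ Icc 0 1 := Icc_subset_Icc (ht i).1 le_rfl
    rw [integral_indicator_Ici (ht i), integral_eq_sub_of_hasDerivWithinAt_Icc (ht i).2
      (fun s hs => (hf s (hsub hs)).mono hsub) (hf'i.mono_set (by
        rw [uIcc_of_le (ht i).2, uIcc_of_le zero_le_one]; exact hsub))]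
  simp_rw [hpoint, intervalIntegral.integral_const_mul]
  rw [intervalIntegral.integral_finsetSum fun i _ => hind i]
  simp only [hFTC, Finset.sum_sub_distrib, Finset.sum_const, Finset.card_univ, Fintype.card_fin,
    nsmul_eq_mul]
  field_simp

/-- Koksma's inequality. -/
theorem integral_mul_deriv_le_of_abs_empiricalCDF_sub_le {f f' F F' : ℝ → ℝ} {N : ℕ}
    (hN : N ≠ 0) {t : Fin N → ℝ} (ht : ∀ i, t i ∈ Icc (0:ℝ) 1)
    (hf : ∀ s ∈ Icc (0:ℝ) 1, HasDerivWithinAt f (f' s) (Icc 0 1) s)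
    (hf' : ContinuousOn f' (Icc 0 1))
    (hF : ∀ s ∈ Icc (0:ℝ) 1, HasDerivWithinAt F (F' s) (Icc 0 1) s)
    (hF' : ContinuousOn F' (Icc 0 1)) (hF₀ : F 0 = 0) (hF₁ : F 1 = 1) {D : ℝ}
    (hD : ∀ s ∈ Icc (0:ℝ) 1, |empiricalCDF t s - F s| ≤ D) :
    ∫ s in (0:ℝ)..1, f s * F' s ≤ 1 / N * ∑ i, f (t i) + D * ∫ s in (0:ℝ)..1, |f' s| := by
  have hIcc : uIcc (0:ℝ) 1 = Icc 0 1 := uIcc_of_le zero_le_one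
  have hf'i : IntervalIntegrable f' volume 0 1 := hf'.intervalIntegrable_of_Icc zero_le_one
  have hFc : ContinuousOn F (Icc 0 1) := fun s hs => (hF s hs).continuousWithinAt
  have hparts : ∫ s in (0:ℝ)..1, f s * F' s = f 1 - ∫ s in (0:ℝ)..1, f' s * F s := by
    have := integral_mul_deriv_eq_deriv_mul_of_hasDerivWithinAt (hIcc ▸ hf) (hIcc ▸ hF) hf'i
      (hF'.intervalIntegrable_of_Icc zero_le_one)
    rwa [hF₀, hF₁, mul_zero, mul_one, sub_zero] at this
  have hE : IntervalIntegrable (fun s => f' s * empiricalCDF t s) volume 0 1 :=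
    ((monotone_empiricalCDF t).intervalIntegrable).continuousOn_mul (hIcc ▸ hf')
  have hdiff : ∫ s in (0:ℝ)..1, f' s * (empiricalCDF t s - F s) =
      f 1 - 1 / N * ∑ i, f (t i) - ∫ s in (0:ℝ)..1, f' s * F s := by
    rw [← integral_deriv_mul_empiricalCDF hN ht hf hf',
      ← integral_sub (g := fun s => f' s * F s) hE
        ((hf'.mul hFc).intervalIntegrable_of_Icc zero_le_one)]
    simp only [mul_sub]
  have hbound : ∫ s in (0:ℝ)..1, f' s * (empiricalCDF t s - F s) ≤
      ∫ s in (0:ℝ)..1, |f' s| * D :=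
    (le_abs_self _).trans <| norm_integral_le_of_norm_le zero_le_one
      (.of_forall fun s hs => by
        rw [Real.norm_eq_abs, abs_mul]
        exact mul_le_mul_of_nonneg_left (hD s (Ioc_subset_Icc_self hs)) (abs_nonneg _))
      ((hf'.abs.intervalIntegrable_of_Icc zero_le_one).mul_const D)
  rw [intervalIntegral.integral_mul_const, mul_comm] at hbound
  linarith

theorem mul_integral_sq_le_of_abs_empiricalCDF_sub_le {g g' F F' : ℝ → ℝ} {N : ℕ}
    (hN : N ≠ 0) {t : Fin N → ℝ} (ht : ∀ i, t i ∈ Icc (0:ℝ) 1)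
    (hg : ∀ s ∈ Icc (0:ℝ) 1, HasDerivWithinAt g (g' s) (Icc 0 1) s)
    (hg' : ContinuousOn g' (Icc 0 1))
    (hF : ∀ s ∈ Icc (0:ℝ) 1, HasDerivWithinAt F (F' s) (Icc 0 1) s)
    (hF' : ContinuousOn F' (Icc 0 1)) (hF₀ : F 0 = 0) (hF₁ : F 1 = 1) {c : ℝ}
    (hc : ∀ s ∈ Icc (0:ℝ) 1, c ≤ F' s) {D : ℝ} (hD₀ : 0 ≤ D)
    (hD : ∀ s ∈ Icc (0:ℝ) 1, |empiricalCDF t s - F s| ≤ D) :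
    c * ∫ s in (0:ℝ)..1, g s ^ 2 ≤
      1 / N * ∑ i, g (t i) ^ 2 +
        D * ((∫ s in (0:ℝ)..1, g s ^ 2) + ∫ s in (0:ℝ)..1, g' s ^ 2) := by
  have hgc : ContinuousOn g (Icc 0 1) := fun s hs => (hg s hs).continuousWithinAt
  have hsq : ∀ s ∈ Icc (0:ℝ) 1,
      HasDerivWithinAt (fun x => g x ^ 2) (2 * g s * g' s) (Icc 0 1) s := fun s hs =>
    (hg s hs).fun_pow 2 |>.congr_deriv (by norm_num)
  have hkoksma := integral_mul_deriv_le_of_abs_empiricalCDF_sub_le hN ht hsq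
    ((continuousOn_const.mul hgc).mul hg') hF hF' hF₀ hF₁ hD
  have hlow : c * ∫ s in (0:ℝ)..1, g s ^ 2 ≤ ∫ s in (0:ℝ)..1, g s ^ 2 * F' s := by
    rw [← intervalIntegral.integral_const_mul]
    exact integral_mono_on zero_le_one
      ((continuousOn_const.mul (hgc.pow 2)).intervalIntegrable_of_Icc zero_le_one)
      (((hgc.pow 2).mul hF').intervalIntegrable_of_Icc zero_le_one)
      fun s hs => by rw [mul_comm]; exact mul_le_mul_of_nonneg_left (hc s hs) (sq_nonneg _)
  have hamgm : ∫ s in (0:ℝ)..1, |2 * g s * g' s| ≤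
      (∫ s in (0:ℝ)..1, g s ^ 2) + ∫ s in (0:ℝ)..1, g' s ^ 2 := by
    rw [← integral_add (f := fun s => g s ^ 2) (g := fun s => g' s ^ 2)
      ((hgc.pow 2).intervalIntegrable_of_Icc zero_le_one)
      ((hg'.pow 2).intervalIntegrable_of_Icc zero_le_one)]
    refine integral_mono_on zero_le_one
      ((continuousOn_const.mul hgc).mul hg' |>.abs.intervalIntegrable_of_Icc zero_le_one)
      (((hgc.pow 2).add (hg'.pow 2)).intervalIntegrable_of_Icc zero_le_one) fun s _ => ?_
    rw [abs_mul, abs_mul, abs_two, ← sq_abs (g s), ← sq_abs (g' s)]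
    exact two_mul_le_add_sq _ _
  nlinarith [mul_le_mul_of_nonneg_left hamgm hD₀]

theorem lt_one_of_forall_lt_deriv {F F' : ℝ → ℝ} {c : ℝ} (hF₀ : F 0 = 0) (hF₁ : F 1 = 1)
    (hF : ∀ s ∈ Icc (0:ℝ) 1, HasDerivAt F (F' s) s) (hc : ∀ s ∈ Icc (0:ℝ) 1, c < F' s) :
    c < 1 := by
  obtain ⟨ξ, hξ, hslope⟩ := exists_hasDerivAt_eq_slope F F' zero_lt_one
    (fun s hs => (hF s hs).continuousAt.continuousWithinAt)
    fun s hs => hF s (Ioo_subset_Icc_self hs)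
  have := hc ξ (Ioo_subset_Icc_self hξ)
  rw [hslope, hF₀, hF₁] at this
  simpa using this

theorem mul_le_of_forall_le_div_add_pow_mul {C D δ N₀ N₁ B : ℝ} {k : ℕ} (hD₀ : 0 ≤ D)
    (hD₁ : D ≤ 1) (hδ₀ : 0 < δ) (hδ₁ : δ ≤ 1) (hC : 0 ≤ C) (hB : 0 ≤ B)
    (h : ∀ ε : ℝ, 0 < ε → ε ≤ 1 → N₁ ≤ C / ε * N₀ + C * ε ^ k * B) :
    D * N₁ ≤ C * D ^ δ * N₀ + C * D ^ (((k + 1 : ℕ) : ℝ) * (1 - 2 * δ)) * B := by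
  rcases hD₀.eq_or_lt with rfl | hD
  · rw [Real.zero_rpow hδ₀.ne']
    simp only [zero_mul, mul_zero, zero_add]
    positivity
  -- `ε = D ^ (1 - δ)` balances `D / ε = D ^ δ`.
  set ε := D ^ (1 - δ)
  have hε₀ : 0 < ε := Real.rpow_pos_of_pos hD _
  have hε := h ε hε₀ (Real.rpow_le_one hD₀ hD₁ (by linarith))
  have hdiv : D / ε = D ^ δ :=
    (div_eq_iff hε₀.ne').2 (by rw [← Real.rpow_add hD]; norm_num)
  have hpow : D * ε ^ k = D ^ (1 + (1 - δ) * k) := by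
    rw [← Real.rpow_natCast, ← Real.rpow_mul hD₀, Real.rpow_add hD, Real.rpow_one]
  have hexp : D ^ (1 + (1 - δ) * k) ≤ D ^ (((k + 1 : ℕ) : ℝ) * (1 - 2 * δ)) :=
    Real.rpow_le_rpow_of_exponent_ge hD hD₁ (by push_cast; nlinarith [k.cast_nonneg (α := ℝ)])
  calc D * N₁ ≤ D * (C / ε * N₀ + C * ε ^ k * B) := mul_le_mul_of_nonneg_left hε hD₀
    _ = C * (D / ε) * N₀ + C * (D * ε ^ k) * B := by ring
    _ ≤ C * D ^ δ * N₀ + C * D ^ (((k + 1 : ℕ) : ℝ) * (1 - 2 * δ)) * B := by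
      rw [hdiv, hpow]
      gcongr

/-- Lower discrete ℓ² bound via discrepancy: for every `δ ∈ (0,1/2)` with
`c_F > c₁ (D*_N)^δ + D*_N`,
`(c_F - c₁ (D*_N)^δ - D*_N) ∫ g² ≤ (1/N) ∑ g(t_i)² + c₁ (D*_N)^(m(1-2δ)) ∫ |g^(m)|²`. -/
theorem discrete_l2_lower_bound (m : ℕ) :
    ∃ c₁ : ℝ, 0 < c₁ ∧
    ∀ (N : ℕ), m < N → ∀ (t : Fin N → ℝ), (∀ i, t i ∈ Icc (0:ℝ) 1) →
    ∀ (g : ℝ → ℝ), ContDiffOn ℝ m g (Icc (0:ℝ) 1) →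
    ∀ (F F' : ℝ → ℝ) (cF CF : ℝ), 0 < cF →
      F 0 = 0 → F 1 = 1 →
      (∀ s ∈ Icc (0:ℝ) 1, HasDerivAt F (F' s) s) →
      ContinuousOn F' (Icc (0:ℝ) 1) →
      (∀ s ∈ Icc (0:ℝ) 1, cF < F' s ∧ F' s < CF) →
    ∀ D : ℝ,
      D = sSup ((fun s =>
        |((Finset.univ.filter (fun i => t i ≤ s)).card : ℝ) / N - F s|) '' Icc (0:ℝ) 1) →
      ∀ δ : ℝ, δ ∈ Ioo (0:ℝ) (1/2) →
        c₁ * D ^ δ + D < cF →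
        (cF - c₁ * D ^ δ - D) * (∫ s in (0:ℝ)..1, (g s) ^ 2) ≤
          (1 / (N : ℝ)) * ∑ i, (g (t i)) ^ 2 +
            c₁ * D ^ ((m : ℝ) * (1 - 2 * δ)) *
              ∫ s in (0:ℝ)..1, (iteratedDerivWithin m g (Icc (0:ℝ) 1) s) ^ 2 := by
  -- `m - 1` truncates at `m = 0`, where any constant `≥ 1` will do.
  obtain ⟨C, hC, hinterp⟩ := exists_integral_sq_deriv_le (m - 1)
  refine ⟨C, by linarith, fun N hmN t ht g hg F F' cF CF _ hF₀ hF₁ hF hF' hFc D hD δ hδ hDc => ?_⟩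
  have hcF : cF < 1 := lt_one_of_forall_lt_deriv hF₀ hF₁ hF fun s hs => (hFc s hs).1
  have hD₀ : 0 ≤ D := hD ▸ Real.sSup_nonneg (by rintro _ ⟨s, -, rfl⟩; positivity)
  have hD₁ : D ≤ 1 := by linarith [mul_nonneg (by linarith : 0 ≤ C) (Real.rpow_nonneg hD₀ δ)]
  have hDs : ∀ s ∈ Icc (0:ℝ) 1, |empiricalCDF t s - F s| ≤ D := fun s hs =>
    hD ▸ abs_empiricalCDF_sub_le_sSup t isCompact_Icc
      (fun x hx => (hF x hx).continuousAt.continuousWithinAt) hs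
  rcases m with _ | k
  · simp only [CharP.cast_eq_zero, zero_mul, Real.rpow_zero, mul_one, iteratedDerivWithin_zero]
    have hA : 0 ≤ ∫ s in (0:ℝ)..1, g s ^ 2 := integral_nonneg zero_le_one fun _ _ => sq_nonneg _
    have hS : 0 ≤ 1 / (N : ℝ) * ∑ i, g (t i) ^ 2 := by positivity
    have : cF - C * D ^ δ - D ≤ C := by
      linarith [mul_nonneg (by linarith : 0 ≤ C) (Real.rpow_nonneg hD₀ δ)]
    linarith [mul_le_mul_of_nonneg_right this hA]
  rw [Nat.add_sub_cancel] at hinterp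
  have hG := hg.isDerivChainOn_iteratedDerivWithin (uniqueDiffOn_Icc zero_lt_one)
  have hlow := mul_integral_sq_le_of_abs_empiricalCDF_sub_le (by omega) ht (hG.1 0 (by omega))
    (hG.continuousOn (by omega)) (fun s hs => (hF s hs).hasDerivWithinAt) hF' hF₀ hF₁
    (fun s hs => (hFc s hs).1.le) hD₀ hDs
  simp only [iteratedDerivWithin_zero, zero_add] at hlow
  have hsmall := mul_le_of_forall_le_div_add_pow_mul hD₀ hD₁ hδ.1 (by linarith [hδ.2])
    (by linarith) (integral_nonneg zero_le_one fun _ _ => sq_nonneg _) (hinterp _ hG)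
  simp only [iteratedDerivWithin_zero] at hsmall
  linarith
end
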